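/- For every field F, the universal grading group functors R : tilde{GrAlg_F} → Grp and R₁ : tilde{GrAlg¹_F} → Grp have no right adjoints. -/

import Mathlib

set_option autoImplicit false

universe u

/-- A group grading on a (not necessarily unital) associative algebra over `F`:
an object of the category `GrAlg_F`. -/
structure GrAlg (F : Type u) [Field F] : Type (u + 1) where
  A : Type u
  [ringA : NonUnitalRing A]
  [modA : Module F A]
  [sccA : SMulCommClass F A A]
  [istA : IsScalarTower F A A]
  G : Type u
  [grpG : Group G]
  comp : G → Submodule F A
  mul_mem : ∀ ⦃g h : G⦄ ⦃a b : A⦄, a ∈ comp g → b ∈ comp h → a * b ∈ comp (g * h)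
  independent : iSupIndep comp
  spans : (⨆ g, comp g) = ⊤

attribute [instance] GrAlg.ringA GrAlg.modA GrAlg.sccA GrAlg.istA GrAlg.grpG

variable {F : Type u} [Field F]

/-- The grading is trivial if all components other than the identity component vanish. -/
def GrAlg.IsTrivialGrading (X : GrAlg F) : Prop := ∀ g : X.G, g ≠ 1 → X.comp g = ⊥

/-- The support of a grading. -/
def GrAlg.supp (X : GrAlg F) : Set X.G := {g | X.comp g ≠ ⊥}

/-- A morphism in `GrAlg_F`: an algebra homomorphism mapping each graded component
into some graded component. -/
@[ext]
structure GrAlgHom (X Y : GrAlg F) where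
  hom : X.A →ₙₐ[F] Y.A
  graded : ∀ g : X.G, ∃ h : Y.G, ∀ a ∈ X.comp g, hom a ∈ Y.comp h

def GrAlgHom.id (X : GrAlg F) : GrAlgHom X X where
  hom := NonUnitalAlgHom.id F X.A
  graded g := ⟨g, fun a ha => ha⟩

def GrAlgHom.comp {X Y Z : GrAlg F} (g : GrAlgHom Y Z) (f : GrAlgHom X Y) :
    GrAlgHom X Z where
  hom := g.hom.comp f.hom
  graded s := by
    obtain ⟨h, hh⟩ := f.graded s
    obtain ⟨k, hk⟩ := g.graded h
    exact ⟨k, fun a ha => by simpa using hk _ (hh a ha)⟩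

/-- An object of `GrAlg¹_F`: a group grading on a unital associative algebra. -/
structure GrAlgOne (F : Type u) [Field F] extends GrAlg F : Type (u + 1) where
  one : A
  one_mul : ∀ a : A, one * a = a
  mul_one : ∀ a : A, a * one = a

/-- A morphism in `GrAlg¹_F`: a unital graded algebra homomorphism. -/
@[ext]
structure GrAlgOneHom (X Y : GrAlgOne F) extends GrAlgHom X.toGrAlg Y.toGrAlg where
  map_one : toGrAlgHom.hom X.one = Y.one

def GrAlgOneHom.id (X : GrAlgOne F) : GrAlgOneHom X X where
  toGrAlgHom := GrAlgHom.id X.toGrAlg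
  map_one := rfl

def GrAlgOneHom.comp {X Y Z : GrAlgOne F} (g : GrAlgOneHom Y Z) (f : GrAlgOneHom X Y) :
    GrAlgOneHom X Z where
  toGrAlgHom := g.toGrAlgHom.comp f.toGrAlgHom
  map_one := by
    show (g.toGrAlgHom.hom.comp f.toGrAlgHom.hom) X.one = Z.one
    simp [f.map_one, g.map_one]

/-- A morphism in `tilde{GrAlg_F}`: a graded injective homomorphism. -/
@[ext]
structure TGrAlgHom (X Y : GrAlg F) extends GrAlgHom X Y where
  injOn : ∀ g : X.G, Set.InjOn toGrAlgHom.hom (X.comp g)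

def TGrAlgHom.id (X : GrAlg F) : TGrAlgHom X X where
  toGrAlgHom := GrAlgHom.id X
  injOn g := fun a _ b _ hab => hab

def TGrAlgHom.comp {X Y Z : GrAlg F} (g : TGrAlgHom Y Z) (f : TGrAlgHom X Y) :
    TGrAlgHom X Z where
  toGrAlgHom := g.toGrAlgHom.comp f.toGrAlgHom
  injOn s := by
    intro a ha b hb hab
    obtain ⟨h, hh⟩ := f.graded s
    exact f.injOn s ha hb (g.injOn h (hh a ha) (hh b hb) hab)

/-- A morphism in `tilde{GrAlg¹_F}`: a unital graded injective homomorphism. -/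
@[ext]
structure TGrAlgOneHom (X Y : GrAlgOne F) extends TGrAlgHom X.toGrAlg Y.toGrAlg where
  map_one : toGrAlgHom.hom X.one = Y.one

def TGrAlgOneHom.id (X : GrAlgOne F) : TGrAlgOneHom X X where
  toTGrAlgHom := TGrAlgHom.id X.toGrAlg
  map_one := rfl

def TGrAlgOneHom.comp {X Y Z : GrAlgOne F} (g : TGrAlgOneHom Y Z) (f : TGrAlgOneHom X Y) :
    TGrAlgOneHom X Z where
  toTGrAlgHom := g.toTGrAlgHom.comp f.toTGrAlgHom
  map_one := by
    show (g.toGrAlgHom.hom.comp f.toGrAlgHom.hom) X.one = Z.one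
    simp [f.map_one, g.map_one]
/-- The defining relations of the universal group of a grading: the words
`[g][h][gh]⁻¹` for `g, h` in the support with `A^(g)·A^(h) ≠ 0`. -/
def GrAlg.univRels (X : GrAlg F) : Set (FreeGroup X.supp) :=
  { w | ∃ (g h : X.supp) (hgh : g.1 * h.1 ∈ X.supp),
      (∃ a ∈ X.comp g.1, ∃ b ∈ X.comp h.1, a * b ≠ 0) ∧
      w = FreeGroup.of g * FreeGroup.of h *
          (FreeGroup.of (⟨g.1 * h.1, hgh⟩ : X.supp))⁻¹ }

/-- The universal group of a grading, presented as the quotient of the free group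
on the support by the normal closure of the relations `[g][h][gh]⁻¹`. -/
def GrAlg.univGroup (X : GrAlg F) : Type u :=
  FreeGroup X.supp ⧸ Subgroup.normalClosure X.univRels

noncomputable instance (X : GrAlg F) : Group X.univGroup :=
  inferInstanceAs (Group (FreeGroup X.supp ⧸ Subgroup.normalClosure X.univRels))
lemma GrAlg.eq_of_mem_comp (X : GrAlg F) {a : X.A} {g h : X.G} (ha : a ≠ 0)
    (h1 : a ∈ X.comp g) (h2 : a ∈ X.comp h) : g = h := by
  by_contra hne
  have hd : Disjoint (X.comp g) (X.comp h) :=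
    (X.independent g).mono_right
      (le_iSup₂ (f := fun (j : X.G) (_ : j ≠ g) => X.comp j) h (Ne.symm hne))
  exact ha (Submodule.disjoint_def.mp hd a h1 h2)

namespace TGrAlgHom

variable {X Y : GrAlg F} (f : TGrAlgHom X Y)

/-- The component of `Y` into which the component `X.comp s` is mapped. -/
noncomputable def targ (s : X.supp) : Y.G := (f.graded s.1).choose

lemma targ_spec (s : X.supp) : ∀ a ∈ X.comp s.1, f.hom a ∈ Y.comp (f.targ s) :=
  (f.graded s.1).choose_spec

lemma hom_ne_zero (s : X.supp) {a : X.A} (ha : a ∈ X.comp s.1) (hne : a ≠ 0) :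
    f.hom a ≠ 0 := by
  intro h0
  exact hne (f.injOn s.1 ha (Submodule.zero_mem _) (by simpa using h0))

lemma targ_mem (s : X.supp) : f.targ s ∈ Y.supp := by
  obtain ⟨a, ha, hne⟩ := Submodule.exists_mem_ne_zero_of_ne_bot s.2
  exact Submodule.ne_bot_iff _ |>.mpr ⟨f.hom a, f.targ_spec s a ha, f.hom_ne_zero s ha hne⟩

/-- The lift of the support map to the free group on the support. -/
noncomputable def univMapAux : FreeGroup X.supp →* Y.univGroup :=
  FreeGroup.lift fun s =>
    (QuotientGroup.mk (FreeGroup.of (⟨f.targ s, f.targ_mem s⟩ : Y.supp)) : Y.univGroup)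

lemma univMapAux_rels : ∀ w ∈ X.univRels, f.univMapAux w = 1 := by
  rintro w ⟨g, h, hgh, ⟨a, ha, b, hb, hab⟩, rfl⟩
  have habmem : a * b ∈ X.comp (g.1 * h.1) := X.mul_mem ha hb
  have hfa : f.hom a ∈ Y.comp (f.targ g) := f.targ_spec g a ha
  have hfb : f.hom b ∈ Y.comp (f.targ h) := f.targ_spec h b hb
  have hfab : f.hom (a * b) ∈ Y.comp (f.targ g * f.targ h) := by
    rw [map_mul]
    exact Y.mul_mem hfa hfb
  have hfabne : f.hom (a * b) ≠ 0 := f.hom_ne_zero ⟨g.1 * h.1, hgh⟩ habmem hab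
  have key : f.targ ⟨g.1 * h.1, hgh⟩ = f.targ g * f.targ h :=
    Y.eq_of_mem_comp hfabne (f.targ_spec ⟨g.1 * h.1, hgh⟩ _ habmem) hfab
  have hmem : f.targ g * f.targ h ∈ Y.supp := key ▸ f.targ_mem ⟨g.1 * h.1, hgh⟩
  have hrel : FreeGroup.of (⟨f.targ g, f.targ_mem g⟩ : Y.supp) *
      FreeGroup.of (⟨f.targ h, f.targ_mem h⟩ : Y.supp) *
      (FreeGroup.of (⟨f.targ g * f.targ h, hmem⟩ : Y.supp))⁻¹ ∈ Y.univRels := by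
    refine ⟨⟨f.targ g, f.targ_mem g⟩, ⟨f.targ h, f.targ_mem h⟩, hmem,
      ⟨f.hom a, hfa, f.hom b, hfb, ?_⟩, rfl⟩
    rw [← map_mul]
    exact hfabne
  have heq : (⟨f.targ ⟨g.1 * h.1, hgh⟩, f.targ_mem _⟩ : Y.supp) =
      (⟨f.targ g * f.targ h, hmem⟩ : Y.supp) := Subtype.ext key
  simp only [univMapAux, map_mul, map_inv]
  erw [FreeGroup.lift_apply_of, FreeGroup.lift_apply_of, FreeGroup.lift_apply_of]
  rw [heq]
  exact (QuotientGroup.eq_one_iff _).mpr (Subgroup.subset_normalClosure hrel)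

/-- The universal grading group functor `R` on morphisms. -/
noncomputable def univMap : X.univGroup →* Y.univGroup :=
  QuotientGroup.lift _ f.univMapAux (by
    intro w hw
    have : Subgroup.normalClosure X.univRels ≤ f.univMapAux.ker :=
      Subgroup.normalClosure_le_normal fun w hw => f.univMapAux_rels w hw
    exact this hw)

end TGrAlgHom

/-- The universal grading group functor `R₁` on morphisms. -/
noncomputable def TGrAlgOneHom.univMap {X Y : GrAlgOne F} (f : TGrAlgOneHom X Y) :
    X.univGroup →* Y.univGroup :=
  f.toTGrAlgHom.univMap
section Statement

variable (F : Type u) [Field F]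

/-- The data of a right adjoint to the universal grading group functor
`R : tilde{GrAlg_F} → Grp`: a functor `K` from groups to graded algebras together with a
bijection `Hom(R X, H) ≃ Hom(X, K H)` natural in both variables. -/
structure RightAdjointDataR (F : Type u) [Field F] where
  K : ∀ (H : Type u) [Group H], GrAlg F
  Kmap : ∀ {H₁ H₂ : Type u} [Group H₁] [Group H₂], (H₁ →* H₂) → TGrAlgHom (K H₁) (K H₂)
  Kmap_id : ∀ (H : Type u) [Group H], Kmap (MonoidHom.id H) = TGrAlgHom.id (K H)
  Kmap_comp : ∀ {H₁ H₂ H₃ : Type u} [Group H₁] [Group H₂] [Group H₃]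
    (f : H₁ →* H₂) (g : H₂ →* H₃), Kmap (g.comp f) = (Kmap g).comp (Kmap f)
  θ : ∀ (X : GrAlg F) (H : Type u) [Group H], (X.univGroup →* H) ≃ TGrAlgHom X (K H)
  θ_nat_left : ∀ {X Y : GrAlg F} (v : TGrAlgHom X Y) (H : Type u) [Group H]
    (f : Y.univGroup →* H), θ X H (f.comp v.univMap) = (θ Y H f).comp v
  θ_nat_right : ∀ (X : GrAlg F) {H₁ H₂ : Type u} [Group H₁] [Group H₂] (g : H₁ →* H₂)
    (f : X.univGroup →* H₁), θ X H₂ (g.comp f) = (Kmap g).comp (θ X H₁ f)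

/-- The data of a right adjoint to the universal grading group functor
`R₁ : tilde{GrAlg¹_F} → Grp`. -/
structure RightAdjointDataROne (F : Type u) [Field F] where
  K : ∀ (H : Type u) [Group H], GrAlgOne F
  Kmap : ∀ {H₁ H₂ : Type u} [Group H₁] [Group H₂], (H₁ →* H₂) → TGrAlgOneHom (K H₁) (K H₂)
  Kmap_id : ∀ (H : Type u) [Group H], Kmap (MonoidHom.id H) = TGrAlgOneHom.id (K H)
  Kmap_comp : ∀ {H₁ H₂ H₃ : Type u} [Group H₁] [Group H₂] [Group H₃]
    (f : H₁ →* H₂) (g : H₂ →* H₃), Kmap (g.comp f) = (Kmap g).comp (Kmap f)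
  θ : ∀ (X : GrAlgOne F) (H : Type u) [Group H], (X.univGroup →* H) ≃ TGrAlgOneHom X (K H)
  θ_nat_left : ∀ {X Y : GrAlgOne F} (v : TGrAlgOneHom X Y) (H : Type u) [Group H]
    (f : Y.univGroup →* H), θ X H (f.comp v.univMap) = (θ Y H f).comp v
  θ_nat_right : ∀ (X : GrAlgOne F) {H₁ H₂ : Type u} [Group H₁] [Group H₂] (g : H₁ →* H₂)
    (f : X.univGroup →* H₁), θ X H₂ (g.comp f) = (Kmap g).comp (θ X H₁ f)

end Statement

/-! If `K` were right adjoint to `R`, then `Hom(X, K 1) ≃ Hom(R X, 1)` would be nonempty for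
every grading `X`. But a graded injective morphism out of a trivially graded algebra is injective,
and by Cantor's theorem the trivially graded algebra `F^B` on the underlying set `B` of `K 1` does
not inject into `B`. -/

theorem Function.cantor_injective_pi {α : Type*} (M₀ : Type*) [MulZeroOneClass M₀]
    [Nontrivial M₀] (f : (α → M₀) → α) : ¬ Function.Injective f := fun hf =>
  Function.cantor_injective _ (hf.comp fun _ _ => Set.indicator_one_inj M₀)

def GrAlg.trivial (A : Type u) [NonUnitalRing A] [Module F A] [SMulCommClass F A A]
    [IsScalarTower F A A] : GrAlg F where
  A := A
  G := PUnit
  comp _ := ⊤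
  mul_mem _ _ _ _ _ _ := Submodule.mem_top
  independent := iSupIndep_subsingleton _
  spans := by simp

def GrAlgOne.trivial (A : Type u) [Ring A] [Algebra F A] : GrAlgOne F where
  toGrAlg := GrAlg.trivial A
  one := (1 : A)
  one_mul := _root_.one_mul (M := A)
  mul_one := _root_.mul_one (M := A)

lemma TGrAlgHom.injective_of_comp_eq_top {X Y : GrAlg F} (f : TGrAlgHom X Y) {g : X.G}
    (hg : X.comp g = ⊤) : Function.Injective f.hom := by
  simpa [hg] using f.injOn g

lemma TGrAlgHom.isEmpty_of_trivial_pi (Y : GrAlg F) :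
    IsEmpty (TGrAlgHom (GrAlg.trivial (Y.A → F)) Y) :=
  ⟨fun f => Function.cantor_injective_pi F _ (f.injective_of_comp_eq_top (g := ⟨⟩) rfl)⟩

lemma TGrAlgOneHom.isEmpty_of_trivial_pi (Y : GrAlgOne F) :
    IsEmpty (TGrAlgOneHom (GrAlgOne.trivial (Y.A → F)) Y) :=
  ⟨fun f => (TGrAlgHom.isEmpty_of_trivial_pi Y.toGrAlg).false f.toTGrAlgHom⟩

/-- The universal grading group functors `R : tilde{GrAlg_F} → Grp` and
`R₁ : tilde{GrAlg¹_F} → Grp` have no right adjoints. -/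
theorem no_right_adjoints (F : Type u) [Field F] :
    ¬ Nonempty (RightAdjointDataR F) ∧ ¬ Nonempty (RightAdjointDataROne F) := by
  constructor
  · rintro ⟨D⟩
    exact (TGrAlgHom.isEmpty_of_trivial_pi (D.K PUnit)).false (D.θ _ PUnit 1)
  · rintro ⟨D⟩
    exact (TGrAlgOneHom.isEmpty_of_trivial_pi (D.K PUnit)).false (D.θ _ PUnit 1)
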